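/- arXiv:2601.03082 — 6 statements merged into one kernel-verified Lean document; each statement's English description precedes it below -/
import Mathlib

section
/- Let n be a positive integer. Let C̃ be the n×n rational matrix with entries C̃_{i,j} = (n+1−i)(n+1−2i) if i = j; C̃_{i,j} = (n+1−i)(1−i) if i = j+1; C̃_{i,j} = (n+1−i)(n−i) if i = j−1; and C̃_{i,j} = 0 otherwise. Let U be the n×n matrix with entries U_{i,j} = C(n−i, n−j). Then U · C̃ · U⁻¹ equals the lower bidiagonal matrix L with L_{i,i} = i(n−i), L_{i,i−1} = (n+1−i)(1−i) for 2 ≤ i ≤ n, and all other entries 0. -/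
lemma h1q (m k : ℕ) : ((m.choose (k+1)):ℚ) * ((k:ℚ)+1) = (m.choose k : ℚ) * ((m:ℚ) - (k:ℚ)) := by
  rcases le_or_gt k m with h | h
  · have h' := Nat.choose_succ_right_eq m k
    have h2 : ((m.choose (k+1) * (k+1) : ℕ) : ℚ) = ((m.choose k * (m - k) : ℕ) : ℚ) := by
      exact_mod_cast congrArg (Nat.cast : ℕ → ℚ) h'
    push_cast [Nat.cast_sub h] at h2
    linear_combination h2
  · simp [Nat.choose_eq_zero_of_lt h, Nat.choose_eq_zero_of_lt (Nat.lt_succ_of_lt h)]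

lemma keyid (n p q : ℕ) :
    (p.choose (q+1) : ℚ) * ((q:ℚ)+1) * ((q:ℚ)+2)
      + (p.choose q : ℚ) * ((q:ℚ)+1) * (2*(q:ℚ)+1-(n:ℚ))
      + (p.choose (q-1) : ℚ) * (q:ℚ) * ((q:ℚ)-(n:ℚ))
    = (p:ℚ) * ((n:ℚ)-(p:ℚ)) * (p.choose q : ℚ)
      + ((p:ℚ)+1) * ((p:ℚ)+1-(n:ℚ)) * (((p+1).choose q : ℚ)) := by
  rcases q with _ | q'
  · simp [Nat.choose_one_right]
    ring
  · have h1 := h1q p (q'+1)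
    have h2 := h1q p q'
    have hP : (((p+1).choose (q'+1)) : ℚ) = (p.choose q' : ℚ) + (p.choose (q'+1) : ℚ) := by
      rw [Nat.choose_succ_succ]; push_cast; ring
    simp only [Nat.succ_sub_one]
    push_cast at h1 h2 hP ⊢
    linear_combination ((q':ℚ)+3) * h1 + ((p:ℚ)+(q':ℚ)+2-(n:ℚ)) * h2
      - (((p:ℚ)+1)*((p:ℚ)+1-(n:ℚ))) * hP


lemma sum3 (n b : ℕ) (hb : b < n) (f g h : ℕ → ℚ) :
    (∑ x ∈ Finset.range n, ((if x = b then f x else 0)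
      + ((if x = b+1 then g x else 0) + (if b = x+1 then h x else 0))))
    = f b + ((if b+1 < n then g (b+1) else 0) + (if 1 ≤ b then h (b-1) else 0)) := by
  rw [Finset.sum_add_distrib, Finset.sum_add_distrib, Finset.sum_ite_eq', Finset.sum_ite_eq']
  congr 1
  · rw [if_pos (Finset.mem_range.mpr hb)]
  congr 1
  · simp [Finset.mem_range]
  · rcases b with _ | bm
    · simp
    · simp only [add_left_inj]
      rw [Finset.sum_ite_eq]
      simp only [Finset.mem_range, Nat.add_sub_cancel]
      rw [if_pos (by omega), if_pos (by omega)]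

lemma sum2 (n a : ℕ) (ha : a < n) (f g : ℕ → ℚ) :
    (∑ x ∈ Finset.range n, ((if a = x then f x else 0) + (if a = x+1 then g x else 0)))
    = f a + (if 1 ≤ a then g (a-1) else 0) := by
  rw [Finset.sum_add_distrib, Finset.sum_ite_eq]
  congr 1
  · rw [if_pos (Finset.mem_range.mpr ha)]
  · rcases a with _ | am
    · simp
    · simp only [add_left_inj]
      rw [Finset.sum_ite_eq]
      simp only [Finset.mem_range, Nat.add_sub_cancel]
      rw [if_pos (by omega), if_pos (by omega)]

/-- The tridiagonal matrix `C̃` is conjugated by `U` (with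
`U i j = C(n-i, n-j)`, 1-based) into the stated lower bidiagonal matrix `L`. -/
theorem stmt_1 (n : ℕ) (hn : 0 < n)
    (Ct U L : Matrix (Fin n) (Fin n) ℚ)
    (hCt : ∀ i j : Fin n, Ct i j =
      if i.val = j.val then
        ((n : ℚ) + 1 - ((i.val : ℚ) + 1)) * ((n : ℚ) + 1 - 2 * ((i.val : ℚ) + 1))
      else if i.val = j.val + 1 then
        ((n : ℚ) + 1 - ((i.val : ℚ) + 1)) * (1 - ((i.val : ℚ) + 1))
      else if j.val = i.val + 1 then
        ((n : ℚ) + 1 - ((i.val : ℚ) + 1)) * ((n : ℚ) - ((i.val : ℚ) + 1))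
      else 0)
    (hU : ∀ i j : Fin n, U i j = ((n - (i.val + 1)).choose (n - (j.val + 1)) : ℚ))
    (hL : ∀ i j : Fin n, L i j =
      if i.val = j.val then
        ((i.val : ℚ) + 1) * ((n : ℚ) - ((i.val : ℚ) + 1))
      else if i.val = j.val + 1 then
        ((n : ℚ) + 1 - ((i.val : ℚ) + 1)) * (1 - ((i.val : ℚ) + 1))
      else 0) :
    U * Ct * U⁻¹ = L := by
  have hdet : U.det = 1 := by
    have hbt : U.BlockTriangular id := by
      intro i j hij
      have h1 : (j : ℕ) < (i : ℕ) := hij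
      have h2 : (i : ℕ) < n := i.isLt
      have h3 : n - ((i:ℕ) + 1) < n - ((j:ℕ) + 1) := by omega
      rw [hU, Nat.choose_eq_zero_of_lt h3, Nat.cast_zero]
    rw [Matrix.det_of_upperTriangular hbt]
    have : ∀ i : Fin n, U i i = 1 := by
      intro i; rw [hU, Nat.choose_self]; simp
    simp [this]
  have hmul : U * Ct = L * U := by
    ext i j
    rw [Matrix.mul_apply, Matrix.mul_apply]
    simp only [hU, hCt, hL]
    obtain ⟨a, ha⟩ := i
    obtain ⟨b, hb⟩ := j
    simp only [Fin.val_mk]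
    rw [Fin.sum_univ_eq_sum_range (fun x => (((n - (a + 1)).choose (n - (x + 1)) : ℕ) : ℚ) *
        (if x = b then ((n:ℚ) + 1 - ((x:ℚ) + 1)) * ((n:ℚ) + 1 - 2 * ((x:ℚ) + 1))
        else if x = b + 1 then ((n:ℚ) + 1 - ((x:ℚ) + 1)) * (1 - ((x:ℚ) + 1))
        else if b = x + 1 then ((n:ℚ) + 1 - ((x:ℚ) + 1)) * ((n:ℚ) - ((x:ℚ) + 1)) else 0)) n,
      Fin.sum_univ_eq_sum_range (fun x =>
        (if a = x then ((a:ℚ) + 1) * ((n:ℚ) - ((a:ℚ) + 1))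
         else if a = x + 1 then ((n:ℚ) + 1 - ((a:ℚ) + 1)) * (1 - ((a:ℚ) + 1)) else 0) *
        (((n - (x + 1)).choose (n - (b + 1)) : ℕ) : ℚ)) n]
    have lsplit : ∀ x ∈ Finset.range n,
        (((n - (a + 1)).choose (n - (x + 1)) : ℕ) : ℚ) *
        (if x = b then ((n:ℚ) + 1 - ((x:ℚ) + 1)) * ((n:ℚ) + 1 - 2 * ((x:ℚ) + 1))
        else if x = b + 1 then ((n:ℚ) + 1 - ((x:ℚ) + 1)) * (1 - ((x:ℚ) + 1))
        else if b = x + 1 then ((n:ℚ) + 1 - ((x:ℚ) + 1)) * ((n:ℚ) - ((x:ℚ) + 1)) else 0)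
        = (if x = b then (((n - (a + 1)).choose (n - (x + 1)) : ℕ) : ℚ) *
              (((n:ℚ) + 1 - ((x:ℚ) + 1)) * ((n:ℚ) + 1 - 2 * ((x:ℚ) + 1))) else 0)
          + ((if x = b + 1 then (((n - (a + 1)).choose (n - (x + 1)) : ℕ) : ℚ) *
              (((n:ℚ) + 1 - ((x:ℚ) + 1)) * (1 - ((x:ℚ) + 1))) else 0)
            + (if b = x + 1 then (((n - (a + 1)).choose (n - (x + 1)) : ℕ) : ℚ) *
              (((n:ℚ) + 1 - ((x:ℚ) + 1)) * ((n:ℚ) - ((x:ℚ) + 1))) else 0)) := by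
      intro x _
      split_ifs <;> first | omega | ring
    have rsplit : ∀ x ∈ Finset.range n,
        (if a = x then ((a:ℚ) + 1) * ((n:ℚ) - ((a:ℚ) + 1))
         else if a = x + 1 then ((n:ℚ) + 1 - ((a:ℚ) + 1)) * (1 - ((a:ℚ) + 1)) else 0) *
        (((n - (x + 1)).choose (n - (b + 1)) : ℕ) : ℚ)
        = (if a = x then (((a:ℚ) + 1) * ((n:ℚ) - ((a:ℚ) + 1))) *
              (((n - (x + 1)).choose (n - (b + 1)) : ℕ) : ℚ) else 0)
          + (if a = x + 1 then (((n:ℚ) + 1 - ((a:ℚ) + 1)) * (1 - ((a:ℚ) + 1))) *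
              (((n - (x + 1)).choose (n - (b + 1)) : ℕ) : ℚ) else 0) := by
      intro x _
      split_ifs <;> first | omega | ring
    rw [Finset.sum_congr rfl lsplit, Finset.sum_congr rfl rsplit, sum3 n b hb, sum2 n a ha]
    have hl2 : (if b + 1 < n then
          (((n - (a+1)).choose (n - (b+1+1)) : ℕ) : ℚ) *
            (((n:ℚ) + 1 - (((b+1:ℕ):ℚ) + 1)) * (1 - (((b+1:ℕ):ℚ) + 1))) else 0)
        = (((n - (a+1)).choose (n - (b+1+1)) : ℕ) : ℚ) *
            (((n:ℚ) - (b:ℚ) - 1) * (0 - ((b:ℚ)+1))) := by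
      rcases lt_or_ge (b+1) n with h | h
      · rw [if_pos h]; push_cast; ring
      · rw [if_neg (by omega)]
        have hnb : n = b + 1 := by omega
        subst hnb
        push_cast; ring
    have hl3 : (if 1 ≤ b then
          (((n - (a+1)).choose (n - (b-1+1)) : ℕ) : ℚ) *
            (((n:ℚ) + 1 - (((b-1:ℕ):ℚ) + 1)) * ((n:ℚ) - (((b-1:ℕ):ℚ) + 1))) else 0)
        = (((n - (a+1)).choose (n - b) : ℕ) : ℚ) *
            (((n:ℚ) + 1 - (b:ℚ)) * ((n:ℚ) - (b:ℚ))) := by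
      rcases Nat.eq_zero_or_pos b with rfl | hb0
      · rw [if_neg (by omega), Nat.sub_zero, Nat.choose_eq_zero_of_lt (by omega)]
        simp
      · rw [if_pos (show 1 ≤ b by omega), show b - 1 + 1 = b by omega]
        push_cast [Nat.cast_sub hb0]; ring
    have hr : (if 1 ≤ a then
          ((n:ℚ) + 1 - ((a:ℚ) + 1)) * (1 - ((a:ℚ) + 1)) *
            (((n - (a-1+1)).choose (n - (b+1)) : ℕ) : ℚ) else 0)
        = ((n:ℚ) - (a:ℚ)) * (0 - (a:ℚ)) *
            (((n - a).choose (n - (b+1)) : ℕ) : ℚ) := by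
      rcases Nat.eq_zero_or_pos a with rfl | ha0
      · rw [if_neg (by omega)]; ring
      · rw [if_pos (show 1 ≤ a by omega), show a - 1 + 1 = a by omega]
        ring
    rw [hl2, hl3, hr]
    have hk := keyid n (n - (a+1)) (n - (b+1))
    rw [show n - (b+1) + 1 = n - b by omega,
        show n - (b+1) - 1 = n - (b+1+1) by omega,
        show n - (a+1) + 1 = n - a by omega] at hk
    push_cast [Nat.cast_sub (show a+1 ≤ n by omega),
      Nat.cast_sub (show b+1 ≤ n by omega)] at hk
    linear_combination hk
  calc U * Ct * U⁻¹ = L * (U * U⁻¹) := by rw [hmul, Matrix.mul_assoc]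
    _ = L := by rw [Matrix.mul_nonsing_inv U (by rw [hdet]; exact isUnit_one), Matrix.mul_one]
end

section
/- Let n ≥ 2 be an integer and let t be a rational number. Let C be the (n−1)×(n−1) rational matrix with entries C_{i,j} = t − (n−2i+2)(n−1−i) − 1 if i = j; C_{i,j} = (i−1)(n−i) if i = j+1; C_{i,j} = −(n−1−i)(n−i) if i = j−1; and C_{i,j} = 0 otherwise. Then det C = ∏_{i=1}^{n−1} (t − n + 1 − i(n−1−i)). -/
open Finset

/-! Auxiliary scalar functions (0-based indices, matrix size `s`, with `n = s+1`). -/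

/-- Entries of the lower-triangular conjugating matrix. -/
def lA (s i j : ℕ) : ℚ :=
  if j ≤ i then (-1 : ℚ) ^ (i - j) * (i.choose j) * ((s : ℚ) - i) else 0

/-- Diagonal entries of `C` (with `n = s+1`). -/
def dA (s : ℕ) (t : ℚ) (i : ℕ) : ℚ :=
  t - ((s : ℚ) + 1 - 2 * ((i : ℚ) + 1) + 2) * ((s : ℚ) - ((i : ℚ) + 1)) - 1

/-- Subdiagonal entries of `C`. -/
def sA (s i : ℕ) : ℚ := (i : ℚ) * ((s : ℚ) - (i : ℚ))

/-- Superdiagonal entries of `C`. -/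
def uA (s i : ℕ) : ℚ := -(((s : ℚ) - ((i : ℚ) + 1)) * ((s : ℚ) + 1 - ((i : ℚ) + 1)))

/-- The eigenvalues. -/
def lamA (s : ℕ) (t : ℚ) (j : ℕ) : ℚ := t - (s : ℚ) - ((j : ℚ) + 1) * ((s : ℚ) - 1 - (j : ℚ))

/-- Entries of `C`. -/
def cA (s : ℕ) (t : ℚ) (i j : ℕ) : ℚ :=
  if i = j then dA s t i else if i = j + 1 then sA s i else if j = i + 1 then uA s i else 0

/-- Entries of the upper bidiagonal matrix `U`. -/
def uU (s : ℕ) (t : ℚ) (k j : ℕ) : ℚ :=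
  (if k = j then lamA s t j else 0) + (if j = k + 1 then -(((s : ℚ) - (j : ℚ)) ^ 2) else 0)

lemma lA_le (s i j : ℕ) (h : j ≤ i) :
    lA s i j = (-1 : ℚ) ^ (i - j) * (i.choose j) * ((s : ℚ) - i) := if_pos h

lemma lA_gt (s i j : ℕ) (h : i < j) : lA s i j = 0 := if_neg (by omega)

lemma cA_split (s : ℕ) (t : ℚ) (i k : ℕ) :
    cA s t i k = (if k = i then dA s t i else 0) + (if k + 1 = i then sA s i else 0)
      + (if k = i + 1 then uA s i else 0) := by
  unfold cA
  split_ifs <;> first | (exfalso; omega) | ring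

lemma sumCL (s : ℕ) (t : ℚ) (i j : ℕ) (hi : i < s) :
    ∑ k ∈ range s, cA s t i k * lA s k j
      = dA s t i * lA s i j + sA s i * lA s (i - 1) j + uA s i * lA s (i + 1) j := by
  simp only [cA_split, add_mul, sum_add_distrib, ite_mul, zero_mul]
  congr 1
  congr 1
  · rw [Finset.sum_ite_eq']
    simp [hi, mul_comm]
  · cases i with
    | zero => simp [sA]
    | succ ii =>
      simp only [Nat.add_right_cancel_iff]
      rw [Finset.sum_ite_eq']
      have hmem : ii ∈ range s := by simp; omega
      simp [hmem, Nat.add_sub_cancel, mul_comm]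
  · rw [Finset.sum_ite_eq']
    by_cases h : i + 1 < s
    · simp [h, mul_comm]
    · have h2 : i + 1 = s := by omega
      have h3 : ((i : ℚ) + 1) = (s : ℚ) := by exact_mod_cast congrArg (Nat.cast : ℕ → ℚ) h2
      simp only [mem_range, h, if_false]
      rw [uA, h3, sub_self, zero_mul, neg_zero, zero_mul]

lemma sumLU (s : ℕ) (t : ℚ) (i j : ℕ) (hj : j < s) :
    ∑ k ∈ range s, lA s i k * uU s t k j
      = lA s i j * lamA s t j
        + (if j = 0 then 0 else -(((s : ℚ) - (j : ℚ)) ^ 2) * lA s i (j - 1)) := by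
  simp only [uU, mul_add, sum_add_distrib, mul_ite, mul_zero]
  congr 1
  · rw [Finset.sum_ite_eq']
    simp [hj]
  · cases j with
    | zero => simp
    | succ jj =>
      simp only [Nat.add_right_cancel_iff]
      rw [Finset.sum_ite_eq]
      have hmem : jj ∈ range s := by simp; omega
      rw [if_pos hmem, if_neg (by omega : ¬ jj + 1 = 0)]
      simp only [Nat.add_sub_cancel]
      push_cast
      ring

lemma keyid_s3 (s : ℕ) (t : ℚ) (i j : ℕ) (hi : i < s) (hj : j < s) :
    dA s t i * lA s i j + sA s i * lA s (i - 1) j + uA s i * lA s (i + 1) j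
      = lA s i j * lamA s t j
        + (if j = 0 then 0 else -(((s : ℚ) - (j : ℚ)) ^ 2) * lA s i (j - 1)) := by
  rcases Nat.lt_or_ge i j with hij | hij
  · rcases Nat.eq_or_lt_of_le hij with hij1 | hij1
    · -- j = i + 1
      have hj1 : j = i + 1 := by omega
      subst hj1
      rw [if_neg (by omega : ¬ i + 1 = 0)]
      simp only [Nat.add_sub_cancel]
      rw [lA_gt s i (i + 1) (by omega), lA_gt s (i - 1) (i + 1) (by omega),
        lA_le s (i + 1) (i + 1) le_rfl, lA_le s i i le_rfl,
        Nat.sub_self, Nat.sub_self, Nat.choose_self, Nat.choose_self]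
      unfold uA
      push_cast
      ring
    · -- i + 1 < j
      rw [if_neg (by omega : ¬ j = 0)]
      rw [lA_gt s i j (by omega), lA_gt s (i - 1) j (by omega), lA_gt s (i + 1) j (by omega),
        lA_gt s i (j - 1) (by omega)]
      ring
  · -- j ≤ i
    cases i with
    | zero =>
      have hj0 : j = 0 := by omega
      subst hj0
      rw [if_pos rfl]
      rw [(show (0 : ℕ) - 1 = 0 from rfl)]
      rw [lA_le s 0 0 le_rfl, lA_le s 1 0 (by omega)]
      simp only [Nat.sub_self, Nat.sub_zero, Nat.choose_self, Nat.choose_zero_right, pow_zero,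
        pow_one]
      unfold dA sA uA lamA
      push_cast
      ring
    | succ ii =>
      by_cases hji : j = ii + 1
      · -- j = i
        subst hji
        rw [if_neg (by omega : ¬ ii + 1 = 0)]
        simp only [Nat.add_sub_cancel]
        rw [lA_le s (ii + 1) (ii + 1) le_rfl, lA_gt s ii (ii + 1) (by omega),
          lA_le s (ii + 1 + 1) (ii + 1) (by omega), lA_le s (ii + 1) ii (by omega)]
        rw [Nat.sub_self, (show ii + 1 + 1 - (ii + 1) = 1 by omega),
          (show ii + 1 - ii = 1 by omega), Nat.choose_self, Nat.choose_succ_self_right,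
          Nat.choose_succ_self_right]
        unfold dA sA uA lamA
        push_cast
        ring
      · -- j < i
        have hjii : j ≤ ii := by omega
        cases j with
        | zero =>
          rw [if_pos rfl]
          simp only [Nat.add_sub_cancel]
          rw [lA_le s (ii + 1) 0 (by omega), lA_le s ii 0 (by omega),
            lA_le s (ii + 1 + 1) 0 (by omega)]
          simp only [Nat.sub_zero, Nat.choose_zero_right]
          unfold dA sA uA lamA
          push_cast
          simp only [pow_succ]
          ring
        | succ jj =>
          rw [if_neg (by omega : ¬ jj + 1 = 0)]
          simp only [Nat.add_sub_cancel]
          rw [lA_le s (ii + 1) (jj + 1) (by omega), lA_le s ii (jj + 1) (by omega),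
            lA_le s (ii + 1 + 1) (jj + 1) (by omega), lA_le s (ii + 1) jj (by omega)]
          rw [(show ii + 1 - (jj + 1) = (ii - (jj + 1)) + 1 by omega),
            (show ii + 1 + 1 - (jj + 1) = (ii - (jj + 1)) + 2 by omega),
            (show ii + 1 - jj = (ii - (jj + 1)) + 2 by omega)]
          have hz : ((ii.choose (jj + 1) : ℚ)) * ((ii : ℚ) + 1)
              = ((ii + 1).choose (jj + 1) : ℚ) * (((ii : ℚ) + 1) - ((jj : ℚ) + 1)) := by
            have h := Nat.choose_mul_succ_eq ii (jj + 1)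
            calc ((ii.choose (jj + 1) : ℚ)) * ((ii : ℚ) + 1)
                = ((ii.choose (jj + 1) * (ii + 1) : ℕ) : ℚ) := by push_cast; ring
              _ = (((ii + 1).choose (jj + 1) * (ii + 1 - (jj + 1)) : ℕ) : ℚ) := by rw [h]
              _ = ((ii + 1).choose (jj + 1) : ℚ) * (((ii : ℚ) + 1) - ((jj : ℚ) + 1)) := by
                  push_cast [Nat.cast_sub (by omega : jj ≤ ii), Nat.cast_sub (by omega : jj + 1 ≤ ii + 1)]; ring
          have hp : (((ii + 1 + 1).choose (jj + 1) : ℕ) : ℚ)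
              = ((ii + 1).choose jj : ℚ) + ((ii + 1).choose (jj + 1) : ℚ) := by
            rw [Nat.choose_succ_succ' (ii + 1) jj]; push_cast; ring
          have hy : ((ii + 1).choose (jj + 1) : ℚ) * ((jj : ℚ) + 1)
              = ((ii + 1).choose jj : ℚ) * (((ii : ℚ) + 1) - (jj : ℚ)) := by
            have h := Nat.choose_succ_right_eq (ii + 1) jj
            calc ((ii + 1).choose (jj + 1) : ℚ) * ((jj : ℚ) + 1)
                = (((ii + 1).choose (jj + 1) * (jj + 1) : ℕ) : ℚ) := by push_cast; ring
              _ = (((ii + 1).choose jj * (ii + 1 - jj) : ℕ) : ℚ) := by rw [h]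
              _ = ((ii + 1).choose jj : ℚ) * (((ii : ℚ) + 1) - (jj : ℚ)) := by
                  push_cast [Nat.cast_sub (by omega : jj ≤ ii + 1)]; ring
          unfold dA sA uA lamA
          push_cast
          simp only [pow_succ]
          linear_combination
            ((-1 : ℚ) ^ (ii - (jj + 1)) * ((s : ℚ) - ((ii : ℚ) + 1) + 1)
              * ((s : ℚ) - ((ii : ℚ) + 1))) * hz
            + (-((-1 : ℚ) ^ (ii - (jj + 1))) * (((s : ℚ) - ((ii : ℚ) + 1) - 1) ^ 2)
              * ((s : ℚ) - ((ii : ℚ) + 1))) * hp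
            + (-((-1 : ℚ) ^ (ii - (jj + 1))) * ((s : ℚ) - ((ii : ℚ) + 1))
              * (2 * (s : ℚ) - ((ii : ℚ) + 1) - ((jj : ℚ) + 1) - 1)) * hy

theorem aux_det (s : ℕ) (t : ℚ) (D : Matrix (Fin s) (Fin s) ℚ)
    (hD : ∀ i j : Fin s, D i j = cA s t i.val j.val) :
    D.det = ∏ i : Fin s, lamA s t i.val := by
  set L : Matrix (Fin s) (Fin s) ℚ := Matrix.of fun i j => lA s i.val j.val with hL
  set U : Matrix (Fin s) (Fin s) ℚ := Matrix.of fun k j => uU s t k.val j.val with hU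
  have hDL : D * L = L * U := by
    ext i j
    rw [Matrix.mul_apply, Matrix.mul_apply]
    have h1 : ∑ k : Fin s, D i k * L k j
        = ∑ k ∈ range s, cA s t i.val k * lA s k j.val := by
      rw [← Fin.sum_univ_eq_sum_range (fun k => cA s t i.val k * lA s k j.val) s]
      exact Finset.sum_congr rfl fun k _ => by rw [hD i k]; rfl
    have h2 : ∑ k : Fin s, L i k * U k j
        = ∑ k ∈ range s, lA s i.val k * uU s t k j.val := by
      rw [← Fin.sum_univ_eq_sum_range (fun k => lA s i.val k * uU s t k j.val) s]
      rfl
    rw [h1, h2, sumCL s t i.val j.val i.isLt, sumLU s t i.val j.val j.isLt]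
    exact keyid_s3 s t i.val j.val i.isLt j.isLt
  have hLtri : L.BlockTriangular OrderDual.toDual := by
    intro i j hij
    have h2 : (i : ℕ) < (j : ℕ) := hij
    show lA s i.val j.val = 0
    exact if_neg (by omega)
  have hUtri : U.BlockTriangular id := by
    intro i j hij
    have h2 : (j : ℕ) < (i : ℕ) := hij
    show uU s t i.val j.val = 0
    rw [uU, if_neg (by omega : ¬ i.val = j.val), if_neg (by omega : ¬ j.val = i.val + 1)]
    ring
  have hLdet : L.det = ∏ i : Fin s, ((s : ℚ) - (i.val : ℚ)) := by
    rw [Matrix.det_of_lowerTriangular L hLtri]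
    refine Finset.prod_congr rfl fun i _ => ?_
    show lA s i.val i.val = _
    rw [lA_le s i.val i.val le_rfl, Nat.sub_self, Nat.choose_self, pow_zero]
    push_cast
    ring
  have hLne : L.det ≠ 0 := by
    rw [hLdet]
    apply Finset.prod_ne_zero_iff.mpr
    intro i _
    have hlt : (i.val : ℚ) < (s : ℚ) := by exact_mod_cast i.isLt
    exact sub_ne_zero.mpr (by linarith)
  have hUdet : U.det = ∏ j : Fin s, lamA s t j.val := by
    rw [Matrix.det_of_upperTriangular hUtri]
    refine Finset.prod_congr rfl fun j _ => ?_
    show uU s t j.val j.val = _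
    rw [uU, if_pos rfl, if_neg (by omega : ¬ j.val = j.val + 1)]
    ring
  have hdet := congrArg Matrix.det hDL
  rw [Matrix.det_mul, Matrix.det_mul] at hdet
  have hDU : D.det = U.det := by
    rw [mul_comm D.det L.det] at hdet
    exact mul_left_cancel₀ hLne hdet
  rw [hDU, hUdet]

/-- The determinant of the (n-1)×(n-1) tridiagonal matrix `C`
equals `∏_{i=1}^{n-1} (t - n + 1 - i(n-1-i))`. -/
theorem stmt_3 (n : ℕ) (hn : 2 ≤ n) (t : ℚ)
    (C : Matrix (Fin (n - 1)) (Fin (n - 1)) ℚ)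
    (hC : ∀ i j : Fin (n - 1), C i j =
      if i.val = j.val then
        t - ((n : ℚ) - 2 * ((i.val : ℚ) + 1) + 2) * ((n : ℚ) - 1 - ((i.val : ℚ) + 1)) - 1
      else if i.val = j.val + 1 then
        (((i.val : ℚ) + 1) - 1) * ((n : ℚ) - ((i.val : ℚ) + 1))
      else if j.val = i.val + 1 then
        -(((n : ℚ) - 1 - ((i.val : ℚ) + 1)) * ((n : ℚ) - ((i.val : ℚ) + 1)))
      else 0) :
    C.det = ∏ i : Fin (n - 1),
      (t - (n : ℚ) + 1 - ((i.val : ℚ) + 1) * ((n : ℚ) - 1 - ((i.val : ℚ) + 1))) := by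
  have hn' : ((n - 1 : ℕ) : ℚ) + 1 = (n : ℚ) := by
    push_cast [Nat.cast_sub (by omega : 1 ≤ n)]
    ring
  have hCc : ∀ i j : Fin (n - 1), C i j = cA (n - 1) t i.val j.val := by
    intro i j
    rw [hC i j]
    unfold cA dA sA uA
    split_ifs <;> first | rfl | (rw [← hn']; ring)
  rw [aux_det (n - 1) t C hCc]
  refine Finset.prod_congr rfl fun j _ => ?_
  unfold lamA
  rw [← hn']
  ring
end

section
/- Let r be a positive integer, set n = 2r, and let t be a rational number. Let C be the (n−1)×(n−1) rational matrix with entries C_{i,j} = t − (n−2i+2)(n−1−i) − 1 if i = j; C_{i,j} = (i−1)(n−i) if i = j+1; C_{i,j} = −(n−1−i)(n−i) if i = j−1; and C_{i,j} = 0 otherwise. Then det C = (t − n + 1) · ∏_{i=0}^{r−2} (t − n + 1 − r(r−1) + i(i+1))². -/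
open Polynomial

noncomputable def Pp (n : ℕ) (t : ℚ) (k : ℕ) : ℚ[X] :=
  C t * X^k
  - C (n:ℚ) * (X - 1)^(k+1) + (X - 1)^(k+1) * X^1
  - C ((n:ℚ)^2 + (n:ℚ) - 1) * X^k + C (3*(n:ℚ)) * X^(k+1) - C 2 * X^(k+2)
  + C ((n:ℚ)*((n:ℚ)-1)) * (X+1)^k - C (2*(n:ℚ)-1) * ((X+1)^k * X^1) + (X+1)^k * X^2

lemma Pp_eval (n : ℕ) (t : ℚ) (k : ℕ) (x : ℚ) :
    (Pp n t k).eval x = t*x^k - ((n:ℚ)-x)*(x-1)^(k+1)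
      - (((n:ℚ)+2-2*x)*((n:ℚ)-1-x)+1)*x^k + ((n:ℚ)-1-x)*((n:ℚ)-x)*(x+1)^k := by
  simp [Pp]
  ring

lemma coeff_Xsub1 (m k : ℕ) : ((X - 1 : ℚ[X])^m).coeff k = (-1:ℚ)^(m-k) * m.choose k := by
  rw [show (X - 1 : ℚ[X]) = X + Polynomial.C (-1) by simp [sub_eq_add_neg], coeff_X_add_C_pow]

lemma Pp_zero (n : ℕ) (t : ℚ) : Pp n t 0 = C (t - (n:ℚ) + 1) := by
  simp only [Pp, pow_zero, pow_one, map_sub, map_add, map_mul, map_pow, map_one, map_ofNat]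
  ring

lemma Pp_coeff_high (n : ℕ) (t : ℚ) (k j : ℕ) (h : k < j) : (Pp n t k).coeff j = 0 := by
  cases k with
  | zero =>
    rw [Pp_zero, coeff_C, if_neg (by omega)]
  | succ s =>
    simp only [Pp, coeff_add, coeff_sub, coeff_C_mul, coeff_X_pow, coeff_Xsub1,
      coeff_X_add_one_pow, coeff_mul_X_pow']
    rcases (by omega : j = s+2 ∨ j = s+3 ∨ s+4 ≤ j) with rfl | rfl | hj
    · simp only [show s+2-(s+2) = 0 by omega, show s+2-(s+1) = 1 by omega, show s+2-1 = s+1 by omega,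
        show s+1+1 = s+2 from rfl, show s+2-2 = s by omega, Nat.choose_self,
        Nat.choose_succ_self_right, coeff_C]
      norm_num
      push_cast
      ring
    · simp only [show s+3-(s+3) = 0 by omega, show s+3-(s+2) = 1 by omega, show s+3-1 = s+2 by omega,
        show s+1+1 = s+2 from rfl, show s+3-2 = s+1 by omega, show s+3-(s+1) = 2 by omega,
        Nat.choose_self, Nat.choose_succ_self, Nat.choose_succ_self_right,
        show (s+1).choose (s+3) = 0 from Nat.choose_eq_zero_of_lt (by omega), coeff_C]
      norm_num
    · have c1 : (s+2).choose j = 0 := Nat.choose_eq_zero_of_lt (by omega)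
      have c2 : (s+1).choose j = 0 := Nat.choose_eq_zero_of_lt (by omega)
      have c3 : (s+1).choose (j-1) = 0 := Nat.choose_eq_zero_of_lt (by omega)
      have c4 : (s+1).choose (j-2) = 0 := Nat.choose_eq_zero_of_lt (by omega)
      have c5 : (s+2).choose (j-1) = 0 := Nat.choose_eq_zero_of_lt (by omega)
      simp only [show s+1+1 = s+2 from rfl, c1, c2, c3, c4, c5, coeff_C]
      rw [if_pos (by omega : s+2 ≤ j), if_neg (by omega : ¬ j - (s+2) = 0),
        if_pos (by omega : s+1+2 ≤ j), if_neg (by omega : ¬ j - (s+1+2) = 0)]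
      norm_num [show ¬ (j - (s+1) = 0) by omega]

lemma Pp_natDegree (n : ℕ) (t : ℚ) (k : ℕ) : (Pp n t k).natDegree ≤ k :=
  natDegree_le_iff_coeff_eq_zero.mpr fun _ hj => Pp_coeff_high n t k _ hj

lemma Pp_coeff_diag (n : ℕ) (t : ℚ) (k : ℕ) :
    (Pp n t k).coeff k = t - (n:ℚ) + 1 - (k:ℚ)*((n:ℚ)-1-(k:ℚ)) := by
  obtain rfl | rfl | ⟨s, rfl⟩ : k = 0 ∨ k = 1 ∨ ∃ s, k = s + 2 := by
    rcases Nat.lt_or_ge k 2 with h | h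
    · omega
    · exact Or.inr (Or.inr ⟨k - 2, by omega⟩)
  · rw [Pp_zero, coeff_C]
    norm_num
  · simp only [Pp, coeff_add, coeff_sub, coeff_C_mul, coeff_X_pow, coeff_Xsub1,
      coeff_X_add_one_pow, coeff_mul_X_pow', coeff_C]
    norm_num [Nat.choose_self, Nat.choose_succ_self_right]
    push_cast
    ring
  · have h1 : (((s+3).choose (s+1) : ℕ) : ℚ) = ((s:ℚ)+3)*((s:ℚ)+2)/2 := by
      have e := Nat.choose_symm (show 2 ≤ s+3 by omega)
      rw [show s+3-2 = s+1 by omega] at e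
      rw [e, Nat.cast_choose_two]
      push_cast
      ring
    have h2 : (((s+2).choose s : ℕ) : ℚ) = ((s:ℚ)+2)*((s:ℚ)+1)/2 := by
      have e := Nat.choose_symm (show 2 ≤ s+2 by omega)
      rw [show s+2-2 = s by omega] at e
      rw [e, Nat.cast_choose_two]
      push_cast
      ring
    simp only [Pp, coeff_add, coeff_sub, coeff_C_mul, coeff_X_pow, coeff_Xsub1,
      coeff_X_add_one_pow, coeff_mul_X_pow']
    simp only [show s+2+1 = s+3 from rfl, show s+3-(s+2) = 1 by omega, show s+2-1 = s+1 by omega,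
      show s+3-(s+1) = 2 by omega, show s+2-(s+2) = 0 by omega, show s+2-2 = s by omega,
      Nat.choose_self, Nat.choose_succ_self_right, h1, h2, coeff_C]
    norm_num
    push_cast
    ring

/- sum helper lemmas -/
lemma sum_ite_pos {m : ℕ} (P : ℕ → Prop) [DecidablePred P] (c : ℕ) (hc : c < m)
    (hP : ∀ x, P x ↔ x = c) (f : Fin m → ℚ) :
    (∑ l : Fin m, if P (l : ℕ) then f l else 0) = f ⟨c, hc⟩ := by
  rw [Finset.sum_eq_single (⟨c, hc⟩ : Fin m)]
  · rw [if_pos ((hP c).mpr rfl)]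
  · intro b _ hb
    rw [if_neg]
    intro hPb
    exact hb (Fin.ext ((hP _).mp hPb))
  · simp

lemma sum_ite_neg {m : ℕ} (P : ℕ → Prop) [DecidablePred P] (hP : ∀ x, x < m → ¬ P x)
    (f : Fin m → ℚ) :
    (∑ l : Fin m, if P (l : ℕ) then f l else 0) = 0 := by
  apply Finset.sum_eq_zero
  intro l _
  rw [if_neg (hP _ l.isLt)]
lemma main_det (n m : ℕ) (hmn : m + 1 = n) (t : ℚ) (C : Matrix (Fin m) (Fin m) ℚ)
    (hC : ∀ i j : Fin m, C i j =
      if i.val = j.val then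
        t - ((n : ℚ) - 2 * ((i.val : ℚ) + 1) + 2) * ((n : ℚ) - 1 - ((i.val : ℚ) + 1)) - 1
      else if i.val = j.val + 1 then
        (((i.val : ℚ) + 1) - 1) * ((n : ℚ) - ((i.val : ℚ) + 1))
      else if j.val = i.val + 1 then
        -(((n : ℚ) - 1 - ((i.val : ℚ) + 1)) * ((n : ℚ) - ((i.val : ℚ) + 1)))
      else 0) :
    C.det = ∏ j ∈ Finset.range m, (t - (n:ℚ) + 1 - (j:ℚ)*((n:ℚ)-1-(j:ℚ))) := by
  classical
  set E : Matrix (Fin m) (Fin m) ℚ :=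
    Matrix.of (fun i j : Fin m => (-1:ℚ)^(i:ℕ) * (((i:ℕ):ℚ)+1)^(j:ℕ)) with hE
  set T : Matrix (Fin m) (Fin m) ℚ :=
    Matrix.of (fun j k : Fin m => (Pp n t (k:ℕ)).coeff (j:ℕ)) with hT
  have row : ∀ i k : Fin m, (C * E) i k
      = (-1:ℚ)^(i:ℕ) * (Pp n t (k:ℕ)).eval (((i:ℕ):ℚ)+1) := by
    intro i k
    rw [Matrix.mul_apply]
    have hsplit : ∀ l : Fin m, C i l * E l k =
        (if (i:ℕ) = (l:ℕ) then
          (t - ((n : ℚ) - 2 * (((i:ℕ) : ℚ) + 1) + 2) * ((n : ℚ) - 1 - (((i:ℕ) : ℚ) + 1)) - 1)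
            * E l k else 0)
      + (if (i:ℕ) = (l:ℕ)+1 then
          ((((i:ℕ) : ℚ) + 1) - 1) * ((n : ℚ) - (((i:ℕ) : ℚ) + 1)) * E l k else 0)
      + (if (l:ℕ) = (i:ℕ)+1 then
          -(((n : ℚ) - 1 - (((i:ℕ) : ℚ) + 1)) * ((n : ℚ) - (((i:ℕ) : ℚ) + 1))) * E l k else 0) := by
      intro l
      rw [hC]
      split_ifs <;> first | ring1 | (exfalso; omega)
    rw [Finset.sum_congr rfl (fun l _ => hsplit l), Finset.sum_add_distrib,
      Finset.sum_add_distrib]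
    rw [sum_ite_pos (fun x => (i:ℕ) = x) (i:ℕ) i.isLt (fun x => eq_comm)]
    rw [Pp_eval]
    rcases Nat.lt_or_ge ((i:ℕ)+1) m with hR | hR
    · rw [sum_ite_pos (fun x => x = (i:ℕ)+1) ((i:ℕ)+1) hR (fun x => Iff.rfl)]
      rcases Nat.eq_zero_or_pos (i:ℕ) with h0 | h0
      · rw [sum_ite_neg (fun x => (i:ℕ) = x+1) (fun x _ => by omega)]
        simp only [hE, Matrix.of_apply, h0]
        push_cast
        norm_num
        try ring1
      · obtain ⟨a, ha⟩ : ∃ a, (i:ℕ) = a + 1 := ⟨(i:ℕ)-1, by omega⟩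
        rw [sum_ite_pos (fun x => (i:ℕ) = x+1) a (by omega) (fun x => by omega)]
        simp only [hE, Matrix.of_apply, ha]
        push_cast
        ring1
    · have him : (i:ℕ) = m - 1 ∧ (i:ℕ)+1 = m := by have := i.isLt; omega
      have hni : (n:ℚ) = ((i:ℕ):ℚ)+2 := by
        have : n = (i:ℕ)+2 := by omega
        rw [this]
        push_cast
        ring
      rw [sum_ite_neg (fun x => x = (i:ℕ)+1) (fun x hx => by omega)]
      rcases Nat.eq_zero_or_pos (i:ℕ) with h0 | h0
      · rw [sum_ite_neg (fun x => (i:ℕ) = x+1) (fun x _ => by omega)]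
        simp only [hE, Matrix.of_apply, h0, hni]
        push_cast
        norm_num
        try ring1
      · obtain ⟨a, ha⟩ : ∃ a, (i:ℕ) = a + 1 := ⟨(i:ℕ)-1, by omega⟩
        rw [sum_ite_pos (fun x => (i:ℕ) = x+1) a (by omega) (fun x => by omega)]
        simp only [hE, Matrix.of_apply, ha, hni]
        push_cast
        ring1
  have col : ∀ i k : Fin m, (E * T) i k
      = (-1:ℚ)^(i:ℕ) * (Pp n t (k:ℕ)).eval (((i:ℕ):ℚ)+1) := by
    intro i k
    rw [Matrix.mul_apply]
    have hdeg : (Pp n t (k:ℕ)).natDegree < m := lt_of_le_of_lt (Pp_natDegree n t _) k.isLt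
    rw [Polynomial.eval_eq_sum_range' hdeg, Finset.mul_sum,
      ← Fin.sum_univ_eq_sum_range (fun j => (-1:ℚ)^(i:ℕ) *
        ((Pp n t (k:ℕ)).coeff j * (((i:ℕ):ℚ)+1)^j)) m]
    apply Finset.sum_congr rfl
    intro j _
    simp only [hE, hT, Matrix.of_apply]
    ring
  have hCE : C * E = E * T := by
    ext i k
    rw [row, col]
  have hdetE : E.det ≠ 0 := by
    have hEd : E = Matrix.diagonal (fun i : Fin m => (-1:ℚ)^(i:ℕ))
        * Matrix.vandermonde (fun i : Fin m => ((i:ℕ):ℚ)+1) := by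
      ext i j
      simp [hE, Matrix.diagonal_mul, Matrix.vandermonde]
    rw [hEd, Matrix.det_mul, Matrix.det_diagonal, Matrix.det_vandermonde]
    apply mul_ne_zero
    · exact Finset.prod_ne_zero_iff.mpr fun i _ => pow_ne_zero _ (by norm_num)
    · refine Finset.prod_ne_zero_iff.mpr fun i _ => Finset.prod_ne_zero_iff.mpr fun j hj => ?_
      have hij : i < j := Finset.mem_Ioi.mp hj
      have hijn : (i:ℕ) < (j:ℕ) := hij
      have hlt : (((i:ℕ):ℚ)+1) < (((j:ℕ):ℚ)+1) := by
        have : ((i:ℕ):ℚ) < ((j:ℕ):ℚ) := by exact_mod_cast hijn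
        linarith
      exact sub_ne_zero.mpr (ne_of_gt hlt)
  have hdet : C.det = T.det := by
    apply mul_right_cancel₀ hdetE
    have h1 := congrArg Matrix.det hCE
    rw [Matrix.det_mul, Matrix.det_mul] at h1
    rw [h1, mul_comm]
  have hTtri : T.BlockTriangular id := by
    intro j k hjk
    simp only [hT, Matrix.of_apply]
    exact Pp_coeff_high n t _ _ hjk
  rw [hdet, Matrix.det_of_upperTriangular hTtri]
  rw [← Fin.prod_univ_eq_prod_range (fun j => (t - (n:ℚ) + 1 - (j:ℚ)*((n:ℚ)-1-(j:ℚ)))) m]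
  apply Finset.prod_congr rfl
  intro j _
  simp only [hT, Matrix.of_apply, id]
  exact Pp_coeff_diag n t _


/-- For `n = 2r`, the determinant of `C` equals
`(t - n + 1) * ∏_{i=0}^{r-2} (t - n + 1 - r(r-1) + i(i+1))²`. -/
theorem stmt_4 (r : ℕ) (hr : 0 < r) (t : ℚ) (n : ℕ) (hn : n = 2 * r)
    (C : Matrix (Fin (n - 1)) (Fin (n - 1)) ℚ)
    (hC : ∀ i j : Fin (n - 1), C i j =
      if i.val = j.val then
        t - ((n : ℚ) - 2 * ((i.val : ℚ) + 1) + 2) * ((n : ℚ) - 1 - ((i.val : ℚ) + 1)) - 1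
      else if i.val = j.val + 1 then
        (((i.val : ℚ) + 1) - 1) * ((n : ℚ) - ((i.val : ℚ) + 1))
      else if j.val = i.val + 1 then
        -(((n : ℚ) - 1 - ((i.val : ℚ) + 1)) * ((n : ℚ) - ((i.val : ℚ) + 1)))
      else 0) :
    C.det = (t - (n : ℚ) + 1) *
      ∏ i ∈ Finset.range (r - 1),
        (t - (n : ℚ) + 1 - (r : ℚ) * ((r : ℚ) - 1) + (i : ℚ) * ((i : ℚ) + 1)) ^ 2 := by
  have hd := main_det n (n-1) (by omega) t C hC
  rw [hd]
  set F : ℕ → ℚ := fun j => t - (n:ℚ) + 1 - (j:ℚ)*((n:ℚ)-1-(j:ℚ)) with hF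
  set G : ℕ → ℚ := fun i => t - (n : ℚ) + 1 - (r : ℚ) * ((r : ℚ) - 1) + (i : ℚ) * ((i : ℚ) + 1)
    with hG
  have e0 : F 0 = t - (n:ℚ) + 1 := by
    simp [hF]
  have e2 : ∏ i ∈ Finset.range (r-1), F (r + i) = ∏ i ∈ Finset.range (r-1), G i := by
    apply Finset.prod_congr rfl
    intro i _
    simp only [hF, hG, hn]
    push_cast
    ring
  have e3 : ∏ i ∈ Finset.range (r-1), F (i+1) = ∏ i ∈ Finset.range (r-1), G i := by
    rw [← Finset.prod_range_reflect (fun i => G i) (r-1)]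
    apply Finset.prod_congr rfl
    intro i hi
    have hi' : i < r - 1 := Finset.mem_range.mp hi
    simp only [hF, hG, hn]
    have hcast : ((r - 1 - 1 - i : ℕ) : ℚ) = (r:ℚ) - 2 - (i:ℚ) := by
      have : r - 1 - 1 - i = r - (2 + i) := by omega
      rw [this, Nat.cast_sub (by omega)]
      push_cast
      ring
    rw [hcast]
    push_cast
    ring
  have e1 : ∏ x ∈ Finset.range r, F x = F 0 * ∏ i ∈ Finset.range (r-1), F (i+1) := by
    conv_lhs => rw [show r = (r-1)+1 by omega]
    rw [Finset.prod_range_succ']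
    ring
  rw [show n - 1 = r + (r - 1) by omega, Finset.prod_range_add, e1, e2, e3, e0]
  have : ∏ i ∈ Finset.range (r - 1),
      (t - (n : ℚ) + 1 - (r : ℚ) * ((r : ℚ) - 1) + (i : ℚ) * ((i : ℚ) + 1)) ^ 2
      = (∏ i ∈ Finset.range (r - 1), G i) ^ 2 := by
    rw [← Finset.prod_pow]
  rw [this]
  ring
end

section
/- Let r ≥ 2 be an integer, set n = 2r − 1, and let t be a rational number. Let C be the (n−1)×(n−1) rational matrix with entries C_{i,j} = t − (n−2i+2)(n−1−i) − 1 if i = j; C_{i,j} = (i−1)(n−i) if i = j+1; C_{i,j} = −(n−1−i)(n−i) if i = j−1; and C_{i,j} = 0 otherwise. Then det C = (t − n + 1) · (t − n + 1 − (r−1)²) · ∏_{i=1}^{r−2} (t − n + 1 − (r−1)² + i²)². -/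
/-!
Index the rows by `y = 0, …, n - 2` and put `c = n`. Up to the signs `(-1)^y`, `C` is `t - L`
restricted to the sample points `y`, where `L = diffOp c` is a second-order difference operator;
its coefficients towards `y - 1` and `y + 1` vanish at `y = 0` and `y = n - 2`, so nothing is lost
at the boundary. `L` maps the falling factorial `(y)_d` to `λ_d (y)_d - μ_d (y)_{d-1}` with
`λ_d = c - 1 + d (c - 1 - d)`. The matrix of samples `(-1)^y (y)_d` is lower triangular with
diagonal `± y!`, and conjugating `C` by it gives a bidiagonal matrix, so
`det C = ∏_{d < n-1} (t - λ_d)`. For `n = 2r - 1` one has `t - λ_d = T + (r - 1 - d)^2` with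
`T = t - n + 1 - (r - 1)^2`, and the factors for `d` and `2r - 2 - d` coincide.
-/

open Finset Polynomial

section DifferenceOperator

variable {R : Type*} [CommRing R]

def diffOp (c : R) (p : R → R) (y : R) : R :=
  y * (c - 1 - y) * p (y - 1) + ((c - 2 * y) * (c - 2 - y) + 1) * p y
    - (c - 2 - y) * (c - 1 - y) * p (y + 1)

theorem diffOp_descPochhammer (c y : R) (d : ℕ) :
    diffOp c (descPochhammer R d).eval y =
      (c - 1 + d * (c - 1 - d)) * (descPochhammer R d).eval y
        - d * (c - d) * (c - 1 - d) * (descPochhammer R (d - 1)).eval y := by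
  simp only [diffOp]
  match d with
  | 0 =>
    simp only [descPochhammer_zero, eval_one, zero_tsub]
    ring
  | 1 =>
    simp only [descPochhammer_one, descPochhammer_zero, tsub_self, eval_one, eval_X]
    ring
  | k + 2 =>
    have shift (z : R) (j : ℕ) :
        (descPochhammer R (j + 1)).eval z = z * (descPochhammer R j).eval (z - 1) := by
      rw [descPochhammer_succ_left, eval_mul, eval_X, eval_comp, eval_sub, eval_X, eval_one]
    -- every term is a multiple of `g = (y - 1)_k`
    set g := (descPochhammer R k).eval (y - 1)
    have h1 : (descPochhammer R (k + 1)).eval y = y * g := shift y k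
    have h2 : (descPochhammer R (k + 2)).eval y = y * (y - 1 - k) * g := by
      rw [shift, descPochhammer_succ_eval]
      ring
    have h3 : (descPochhammer R (k + 2)).eval (y - 1) = (y - 1 - k) * (y - 1 - (k + 1)) * g := by
      rw [descPochhammer_succ_eval, descPochhammer_succ_eval]
      push_cast
      ring
    have h4 : (descPochhammer R (k + 2)).eval (y + 1) = (y + 1) * y * g := by
      rw [shift, add_sub_cancel_right, h1]
      ring
    rw [h2, h3, h4, show k + 2 - 1 = k + 1 from rfl, h1]
    push_cast
    ring

end DifferenceOperator

section Tridiagonal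

variable {R : Type*} [CommRing R]

theorem Fin.sum_tridiagonal_mul {m : ℕ} (i : ℕ) (hi : i < m) (a b c : R) (g : ℕ → R)
    (hb : i = 0 → b = 0) (hc : i + 1 = m → c = 0) :
    ∑ j : Fin m, (if i = j then a else if i = j + 1 then b else if (j : ℕ) = i + 1 then c else 0)
        * g j = a * g i + b * g (i - 1) + c * g (i + 1) := by
  have split (j : ℕ) :
      (if i = j then a else if i = j + 1 then b else if j = i + 1 then c else 0) * g j =
        (if j = i then a * g i else 0) + (if j = i - 1 then b * g (i - 1) else 0)
          + (if j = i + 1 then c * g (i + 1) else 0) := by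
    rcases Nat.eq_zero_or_pos i with rfl | hpos
    · simp only [hb rfl]
      split_ifs <;> first | omega | contradiction | (subst_vars; simp)
    · split_ifs <;> first | omega | contradiction | (subst_vars; simp)
  rw [Fin.sum_univ_eq_sum_range (fun j => (if i = j then a else if i = j + 1 then b
      else if j = i + 1 then c else 0) * g j) m, sum_congr rfl fun j _ => split j,
    sum_add_distrib, sum_add_distrib, sum_ite_eq', sum_ite_eq', sum_ite_eq']
  by_cases hlast : i + 1 = m
  · simp [hi, hc hlast, show i - 1 < m by omega]
  · simp [hi, show i - 1 < m by omega, show i + 1 < m by omega]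

theorem Fin.sum_mul_bidiagonal {m : ℕ} (d : ℕ) (hd : d < m) (a b : R) (g : ℕ → R)
    (hb : d = 0 → b = 0) :
    ∑ e : Fin m, g e * (if d = e then a else if d = e + 1 then b else 0) =
      g d * a + g (d - 1) * b := by
  simpa [mul_comm] using Fin.sum_tridiagonal_mul d hd a b 0 g hb fun _ => rfl

end Tridiagonal

section Matrices

variable {R : Type*} [CommRing R]

/-- The matrix `C` of the theorem with `0`-based indices: row `i` is the paper's row `i + 1`. -/
def diffOpMatrix (n : ℕ) (t : R) : Matrix (Fin (n - 1)) (Fin (n - 1)) R :=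
  Matrix.of fun i j =>
    if (i : ℕ) = j then t - (((n : R) - 2 * i) * ((n : R) - 2 - i) + 1)
    else if (i : ℕ) = j + 1 then (i : R) * ((n : R) - 1 - i)
    else if (j : ℕ) = i + 1 then -(((n : R) - 2 - i) * ((n : R) - 1 - i))
    else 0

noncomputable def signedDescPochhammerMatrix (m : ℕ) : Matrix (Fin m) (Fin m) R :=
  Matrix.of fun i d => (-1) ^ (i : ℕ) * (descPochhammer R d).eval (i : R)

def diffOpBidiagonal (n : ℕ) (t : R) : Matrix (Fin (n - 1)) (Fin (n - 1)) R :=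
  Matrix.of fun e d =>
    if (d : ℕ) = e then t - ((n : R) - 1 + d * ((n : R) - 1 - d))
    else if (d : ℕ) = e + 1 then d * ((n : R) - d) * ((n : R) - 1 - d)
    else 0

theorem det_signedDescPochhammerMatrix_ne_zero [IsDomain R] [CharZero R] (m : ℕ) :
    (signedDescPochhammerMatrix m : Matrix (Fin m) (Fin m) R).det ≠ 0 := by
  have hlower : (signedDescPochhammerMatrix m : Matrix (Fin m) (Fin m) R).IsLowerTriangular := by
    intro i d hid
    simp only [signedDescPochhammerMatrix, Matrix.of_apply, descPochhammer_eval_eq_descFactorial,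
      Nat.descFactorial_eq_zero_iff_lt.mpr (show (i : ℕ) < d from hid), Nat.cast_zero, mul_zero]
  rw [Matrix.det_of_isLowerTriangular _ hlower, prod_ne_zero_iff]
  intro i _
  simp only [signedDescPochhammerMatrix, Matrix.of_apply, descPochhammer_eval_eq_descFactorial,
    Nat.descFactorial_self]
  exact mul_ne_zero (pow_ne_zero _ (by norm_num)) (Nat.cast_ne_zero.mpr i.val.factorial_ne_zero)

theorem det_diffOpBidiagonal (n : ℕ) (t : R) :
    (diffOpBidiagonal n t).det =
      ∏ d ∈ range (n - 1), (t - ((n : R) - 1 + d * ((n : R) - 1 - d))) := by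
  have hupper : (diffOpBidiagonal n t).IsUpperTriangular := by
    intro e d hde
    have hde : (d : ℕ) < e := hde
    simp only [diffOpBidiagonal, Matrix.of_apply]
    rw [if_neg (by omega), if_neg (by omega)]
  rw [Matrix.det_of_isUpperTriangular hupper, ← Fin.prod_univ_eq_prod_range]
  simp [diffOpBidiagonal]

theorem diffOpMatrix_mul_signedDescPochhammerMatrix (n : ℕ) (t : R) :
    diffOpMatrix n t * signedDescPochhammerMatrix (n - 1) =
      signedDescPochhammerMatrix (n - 1) * diffOpBidiagonal n t := by
  ext i d
  rw [Matrix.mul_apply, Matrix.mul_apply]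
  simp only [diffOpMatrix, diffOpBidiagonal, signedDescPochhammerMatrix, Matrix.of_apply]
  refine (Fin.sum_tridiagonal_mul _ i.isLt _ _ _
    (fun j => (-1) ^ j * (descPochhammer R d).eval (j : R)) ?_ ?_).trans
    (Eq.trans ?_ (Fin.sum_mul_bidiagonal _ d.isLt _ _
      (fun e => (-1) ^ (i : ℕ) * (descPochhammer R e).eval (i : R)) ?_).symm)
  · intro h
    simp [h]
  · intro h
    have hn : (n : R) = ((i + 2 : ℕ) : R) := congrArg Nat.cast (by omega)
    rw [hn]
    push_cast
    ring
  · -- at `i = 0` the coefficient vanishes, so the truncated `i - 1` does no harm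
    have hprev : ((i : ℕ) : R) * ((n : R) - 1 - (i : ℕ)) *
        ((-1) ^ ((i : ℕ) - 1) * (descPochhammer R d).eval (((i : ℕ) - 1 : ℕ) : R)) =
        -((-1) ^ (i : ℕ) * (((i : ℕ) : R) * ((n : R) - 1 - (i : ℕ)) *
          (descPochhammer R d).eval (((i : ℕ) : R) - 1))) := by
      rcases Nat.eq_zero_or_pos (i : ℕ) with h | h
      · simp [h]
      · obtain ⟨k, hk⟩ : ∃ k, (i : ℕ) = k + 1 := ⟨(i : ℕ) - 1, by omega⟩
        rw [hk]
        push_cast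
        simp only [add_sub_cancel_right, pow_succ]
        ring
    have key := diffOp_descPochhammer (n : R) ((i : ℕ) : R) d
    simp only [diffOp] at key
    rw [hprev, pow_succ]
    push_cast
    linear_combination (-(-1 : R) ^ (i : ℕ)) * key
  · intro h
    simp [h]

theorem det_diffOpMatrix [IsDomain R] [CharZero R] (n : ℕ) (t : R) :
    (diffOpMatrix n t).det =
      ∏ d ∈ range (n - 1), (t - ((n : R) - 1 + d * ((n : R) - 1 - d))) := by
  have h := congrArg Matrix.det (diffOpMatrix_mul_signedDescPochhammerMatrix n t)
  rw [Matrix.det_mul, Matrix.det_mul, mul_comm] at h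
  rw [← det_diffOpBidiagonal]
  exact mul_left_cancel₀ (det_signedDescPochhammerMatrix_ne_zero _) h

end Matrices

theorem prod_range_add_sq_sub_sq {R : Type*} [CommRing R] (T : R) (s : ℕ) :
    ∏ d ∈ range (2 * (s + 1)), (T + ((s + 1 : ℕ) - (d : R)) ^ 2) =
      (T + ((s + 1 : ℕ) : R) ^ 2) * T * ∏ i ∈ Icc 1 s, (T + (i : R) ^ 2) ^ 2 := by
  have hIcc : ∏ i ∈ Icc 1 s, (T + (i : R) ^ 2) = ∏ i ∈ range s, (T + ((i + 1 : ℕ) : R) ^ 2) := by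
    rw [← Ico_add_one_right_eq_Icc, prod_Ico_eq_prod_range, Nat.add_sub_cancel]
    simp only [add_comm 1]
  have hlow : ∏ x ∈ range s, (T + (((s + 1 : ℕ) : R) - ((s + 1 - 1 - x : ℕ) : R)) ^ 2) =
      ∏ x ∈ range s, (T + ((x + 1 : ℕ) : R) ^ 2) :=
    prod_congr rfl fun x hx => by
      rw [Nat.cast_sub (by simp only [mem_range] at hx; omega)]
      push_cast
      ring
  have hhigh : ∏ k ∈ range s, (T + (((s + 1 : ℕ) : R) - ((s + 1 + (k + 1) : ℕ) : R)) ^ 2) =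
      ∏ k ∈ range s, (T + ((k + 1 : ℕ) : R) ^ 2) :=
    prod_congr rfl fun k _ => by push_cast; ring
  rw [prod_pow, two_mul, prod_range_add, ← prod_range_reflect, hIcc, prod_range_succ,
    prod_range_succ' _ s, hlow, hhigh]
  simp only [Nat.add_sub_cancel, Nat.sub_self, add_zero, Nat.cast_zero, sub_zero, sub_self]
  ring

/-- For `n = 2r - 1` with `r ≥ 2`, the determinant of `C` equals
`(t - n + 1) * (t - n + 1 - (r-1)²) * ∏_{i=1}^{r-2} (t - n + 1 - (r-1)² + i²)²`. -/
theorem stmt_5 (r : ℕ) (hr : 2 ≤ r) (t : ℚ) (n : ℕ) (hn : n = 2 * r - 1)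
    (C : Matrix (Fin (n - 1)) (Fin (n - 1)) ℚ)
    (hC : ∀ i j : Fin (n - 1), C i j =
      if i.val = j.val then
        t - ((n : ℚ) - 2 * ((i.val : ℚ) + 1) + 2) * ((n : ℚ) - 1 - ((i.val : ℚ) + 1)) - 1
      else if i.val = j.val + 1 then
        (((i.val : ℚ) + 1) - 1) * ((n : ℚ) - ((i.val : ℚ) + 1))
      else if j.val = i.val + 1 then
        -(((n : ℚ) - 1 - ((i.val : ℚ) + 1)) * ((n : ℚ) - ((i.val : ℚ) + 1)))
      else 0) :
    C.det = (t - (n : ℚ) + 1) * (t - (n : ℚ) + 1 - ((r : ℚ) - 1) ^ 2) *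
      ∏ i ∈ Finset.Icc 1 (r - 2),
        (t - (n : ℚ) + 1 - ((r : ℚ) - 1) ^ 2 + (i : ℚ) ^ 2) ^ 2 := by
  obtain ⟨s, rfl⟩ : ∃ s, r = s + 2 := ⟨r - 2, by omega⟩
  obtain rfl : n = 2 * s + 3 := by omega
  have hC' : C = diffOpMatrix (2 * s + 3) t := by
    ext i j
    rw [hC]
    simp only [diffOpMatrix, Matrix.of_apply]
    split_ifs <;> push_cast <;> ring
  rw [hC', det_diffOpMatrix, show 2 * s + 3 - 1 = 2 * (s + 1) by omega]
  convert prod_range_add_sq_sub_sq (t - (2 * s + 3 : ℚ) + 1 - (s + 1 : ℚ) ^ 2) s using 1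
  · exact prod_congr rfl fun d _ => by push_cast; ring
  · rw [Nat.add_sub_cancel]
    push_cast
    congr 1
    · ring
    · exact prod_congr rfl fun i _ => by ring
end

section
/- Let n be a positive integer, let U be the n×n rational matrix with entries U_{i,j} = C(n−i, n−j), and let M be any n×n rational matrix satisfying M_{i,j} = 0 whenever i − j ≥ 2. Then for all indices with i − j ≥ 1 one has (U · M · U⁻¹)_{i,j} = M_{i,j}; that is, conjugation by U preserves the subdiagonal entries and keeps all entries below the subdiagonal equal to zero. -/
/-- Conjugation by `U` (with `U i j = C(n-i, n-j)`, 1-based)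
preserves the entries on and below the subdiagonal of any matrix `M` which
vanishes strictly below the subdiagonal. -/
theorem stmt_6 (n : ℕ) (hn : 0 < n)
    (U M : Matrix (Fin n) (Fin n) ℚ)
    (hU : ∀ i j : Fin n, U i j = ((n - (i.val + 1)).choose (n - (j.val + 1)) : ℚ))
    (hM : ∀ i j : Fin n, j.val + 2 ≤ i.val → M i j = 0) :
    ∀ i j : Fin n, j.val + 1 ≤ i.val → (U * M * U⁻¹) i j = M i j := by
  -- U is upper triangular
  have hUt : U.BlockTriangular id := by
    intro i j hij
    simp only [id] at hij
    rw [hU]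
    have h1 : n - (i.val + 1) < n - (j.val + 1) := by omega
    rw [Nat.choose_eq_zero_of_lt h1]
    simp
  have hUdiag : ∀ i : Fin n, U i i = 1 := by
    intro i; rw [hU, Nat.choose_self]; simp
  have hdet : U.det = 1 := by
    rw [Matrix.det_of_upperTriangular hUt]
    simp [hUdiag]
  have hdu : IsUnit U.det := by rw [hdet]; exact isUnit_one
  haveI : Invertible U := U.invertibleOfIsUnitDet hdu
  have hVt : U⁻¹.BlockTriangular id := Matrix.blockTriangular_inv_of_blockTriangular hUt
  have hUV : U * U⁻¹ = 1 := Matrix.mul_nonsing_inv U hdu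
  have hVdiag : ∀ i : Fin n, U⁻¹ i i = 1 := by
    intro i
    have h1 : (U * U⁻¹) i i = 1 := by rw [hUV]; simp
    rw [Matrix.mul_apply] at h1
    rw [Finset.sum_eq_single i] at h1
    · rwa [hUdiag, one_mul] at h1
    · intro k _ hk
      rcases lt_or_gt_of_ne hk with h | h
      · rw [hUt h]; ring
      · rw [hVt h]; ring
    · intro h; exact absurd (Finset.mem_univ i) h
  intro i j hij
  rw [Matrix.mul_apply]
  rw [Finset.sum_eq_single j]
  · rw [hVdiag, mul_one, Matrix.mul_apply, Finset.sum_eq_single i]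
    · rw [hUdiag, one_mul]
    · intro k _ hk
      rcases lt_or_gt_of_ne hk with h | h
      · rw [hUt h, zero_mul]
      · rw [hM k j (by simp only [Fin.lt_def] at h; omega), mul_zero]
    · intro h; exact absurd (Finset.mem_univ i) h
  · intro l _ hl
    rcases lt_or_gt_of_ne hl with h | h
    · have : (U * M) i l = 0 := by
        rw [Matrix.mul_apply]
        apply Finset.sum_eq_zero
        intro k _
        rcases lt_or_ge k i with hk | hk
        · rw [hUt hk, zero_mul]
        · rw [hM k l (by simp only [Fin.lt_def] at h; omega), mul_zero]
      rw [this, zero_mul]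
    · rw [hVt h, mul_zero]
  · intro h; exact absurd (Finset.mem_univ j) h
end

section
/- Let n be a positive integer and r a rational parameter, and let A be the n×n matrix with A_{i,i} = r + b_i + Σ_{t=1}^{n−1} (−1)^{t−1} a_i^{(t)}, A_{i,j} = b_i if i = j+1, A_{i,j} = a_i^{(t)} if i = j−t (1 ≤ t ≤ n−1), and A_{i,j} = 0 otherwise, where b_i = 0 for i ≤ 1 or i > n and a_i^{(t)} = 0 for i + t > n or i ≤ 0. Let P be the n×n matrix with columns f_1 = e_1 and f_j = e_{j−1} + e_j (2 ≤ j ≤ n), and Q the n×n matrix with columns g_j = Σ_{i=1}^{j} (−1)^{i+j} e_i. Then P·A·Q has block form [[A₁, O],[B, r]], where B = (0,…,0,b_n) is a 1×(n−1) row vector, and A₁ is the (n−1)×(n−1) matrix with (A₁)_{i,i} = r + b_{i+1} + Σ_{t=1}^{n−1} (−1)^{t−1} a_i^{(t)}, (A₁)_{i,i−1} = b_i, (A₁)_{i,i+s} = c_i^{(s)} for 1 ≤ s ≤ n−2 where c_i^{(s)} = (−1)^s ( Σ_{t=s+1}^{n−1} (−1)^{t−1} a_i^{(t)} − Σ_{t=s}^{n−1}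 (−1)^{t−1} a_{i+1}^{(t)} ), and all other entries of A₁ are 0. -/
private def Ent (n : ℕ) (r : ℚ) (a : ℕ → ℤ → ℚ) (b : ℤ → ℚ) (i l : ℕ) : ℚ :=
  if i = l then
    r + b ((i : ℤ) + 1) + ∑ t ∈ Finset.Icc 1 (n - 1), (-1 : ℚ) ^ (t - 1) * a t ((i : ℤ) + 1)
  else if i = l + 1 then b ((i : ℤ) + 1)
  else if i < l then a (l - i) ((i : ℤ) + 1)
  else 0

private lemma flip_sum (j : ℕ) (f : ℕ → ℚ) :
    ∑ l ∈ Finset.range (j + 1), (-1 : ℚ) ^ (l + (j + 1)) * f l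
      = -∑ l ∈ Finset.range (j + 1), (-1 : ℚ) ^ (l + j) * f l := by
  rw [← Finset.sum_neg_distrib]
  refine Finset.sum_congr rfl fun l _ => ?_
  rw [show l + (j + 1) = (l + j) + 1 by ring, pow_succ]
  ring

private lemma key_sum (n : ℕ) (r : ℚ) (a : ℕ → ℤ → ℚ) (b : ℤ → ℚ) (hb1 : b 1 = 0) :
    ∀ j : ℕ, j < n → ∀ i : ℕ,
      ∑ l ∈ Finset.range (j + 1), (-1 : ℚ) ^ (l + j) * Ent n r a b i l
        = if i ≤ j then
            (-1 : ℚ) ^ (i + j) *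
              (r + ∑ t ∈ Finset.Icc (j - i + 1) (n - 1), (-1 : ℚ) ^ (t - 1) * a t ((i : ℤ) + 1))
          else if i = j + 1 then b ((i : ℤ) + 1)
          else 0 := by
  intro j
  induction j with
  | zero =>
    intro _ i
    rw [Finset.sum_range_one]
    match i with
    | 0 => simp [Ent, hb1]
    | 1 => simp [Ent]
    | (i + 2) => simp [Ent]
  | succ j ih =>
    intro hjn i
    have hjn' : j < n := Nat.lt_of_succ_lt hjn
    have hone : (-1 : ℚ) ^ ((j + 1) + (j + 1)) = 1 := by
      rw [show (j + 1) + (j + 1) = 2 * (j + 1) by ring, pow_mul]; norm_num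
    rw [Finset.sum_range_succ, flip_sum, ih hjn' i, hone, one_mul]
    rcases Nat.lt_trichotomy i (j + 1) with hij | hij | hij
    · have hij' : i ≤ j := by omega
      rw [if_pos hij', if_pos (show i ≤ j + 1 by omega)]
      have hE : Ent n r a b i (j + 1) = a (j - i + 1) ((i : ℤ) + 1) := by
        unfold Ent
        rw [if_neg (show ¬ i = j + 1 by omega), if_neg (show ¬ i = j + 1 + 1 by omega),
          if_pos (show i < j + 1 by omega), show j + 1 - i = j - i + 1 by omega]
      rw [hE]
      have hsplit : ∑ t ∈ Finset.Icc (j - i + 1) (n - 1), (-1 : ℚ) ^ (t - 1) * a t ((i : ℤ) + 1)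
          = (-1 : ℚ) ^ (j - i) * a (j - i + 1) ((i : ℤ) + 1)
            + ∑ t ∈ Finset.Icc (j - i + 2) (n - 1), (-1 : ℚ) ^ (t - 1) * a t ((i : ℤ) + 1) := by
        rw [Finset.Icc_eq_cons_Ioc (show j - i + 1 ≤ n - 1 by omega), Finset.sum_cons,
          show j - i + 1 - 1 = j - i by omega]
        congr 1
        rw [show Finset.Ioc (j - i + 1) (n - 1) = Finset.Icc (j - i + 2) (n - 1) from by
          rw [← Finset.Icc_add_one_left_eq_Ioc, show j - i + 1 + 1 = j - i + 2 by omega]]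
      rw [hsplit, show j + 1 - i + 1 = j - i + 2 by omega]
      have s1 : (-1 : ℚ) ^ (i + (j + 1)) = -(-1 : ℚ) ^ (i + j) := by
        rw [show i + (j + 1) = (i + j) + 1 by ring, pow_succ]; ring
      have s2 : (-1 : ℚ) ^ (i + j) * (-1 : ℚ) ^ (j - i) = 1 := by
        rw [← pow_add, show i + j + (j - i) = 2 * j by omega, pow_mul]; norm_num
      rw [s1]
      linear_combination (-(a (j - i + 1) ((i : ℤ) + 1))) * s2
    · subst hij
      have hE : Ent n r a b (j + 1) (j + 1)
          = r + b (((j + 1 : ℕ) : ℤ) + 1)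
            + ∑ t ∈ Finset.Icc 1 (n - 1), (-1 : ℚ) ^ (t - 1) * a t (((j + 1 : ℕ) : ℤ) + 1) := by
        unfold Ent; rw [if_pos rfl]
      rw [if_neg (show ¬ j + 1 ≤ j by omega), if_pos (show j + 1 = j + 1 from rfl),
        if_pos (le_refl (j + 1)), hE, show j + 1 - (j + 1) + 1 = 1 by omega, hone, one_mul]
      ring
    · rw [if_neg (show ¬ i ≤ j by omega), if_neg (show ¬ i ≤ j + 1 by omega)]
      have hE : Ent n r a b i (j + 1) = if i = j + 1 + 1 then b ((i : ℤ) + 1) else 0 := by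
        unfold Ent
        rw [if_neg (show ¬ i = j + 1 by omega)]
        by_cases h2 : i = j + 1 + 1
        · rw [if_pos h2, if_pos h2]
        · rw [if_neg h2, if_neg h2, if_neg (show ¬ i < j + 1 by omega)]
      rw [hE, if_neg (show ¬ i = j + 1 by omega)]
      ring

/-- The elementary row/column operations encoded by `P` and `Q`
convert the banded matrix `A` into the block form `[[A₁, O], [B, r]]`, where
`B = (0, …, 0, b_n)` and `A₁` is the stated (n-1)×(n-1) matrix with
superdiagonal entries `c_i^{(s)}`. -/
theorem stmt_11 (n : ℕ) (hn : 0 < n) (r : ℚ)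
    (a : ℕ → ℤ → ℚ) (b : ℤ → ℚ)
    (hb : ∀ i : ℤ, (i ≤ 1 ∨ (n : ℤ) < i) → b i = 0)
    (ha : ∀ t : ℕ, 1 ≤ t → t ≤ n - 1 → ∀ i : ℤ,
      ((n : ℤ) < i + t ∨ i ≤ 0) → a t i = 0)
    (A P Q : Matrix (Fin n) (Fin n) ℚ)
    (hA : ∀ i j : Fin n, A i j =
      if i.val = j.val then
        r + b ((i.val : ℤ) + 1)
          + ∑ t ∈ Finset.Icc 1 (n - 1), (-1 : ℚ) ^ (t - 1) * a t ((i.val : ℤ) + 1)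
      else if i.val = j.val + 1 then b ((i.val : ℤ) + 1)
      else if i.val < j.val then a (j.val - i.val) ((i.val : ℤ) + 1)
      else 0)
    (hP : ∀ i j : Fin n, P i j =
      if i.val = j.val ∨ i.val + 1 = j.val then 1 else 0)
    (hQ : ∀ i j : Fin n, Q i j =
      if i.val ≤ j.val then (-1 : ℚ) ^ ((i.val + 1) + (j.val + 1)) else 0) :
    P * A * Q = fun i j =>
      -- bottom row: the 1×(n-1) block B = (0, …, 0, b_n) followed by r
      if i.val = n - 1 then
        (if j.val = n - 1 then r else if j.val + 2 = n then b (n : ℤ) else 0)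
      -- top-right block: O
      else if j.val = n - 1 then 0
      -- top-left block: A₁
      else if i.val = j.val then
        r + b ((i.val : ℤ) + 2)
          + ∑ t ∈ Finset.Icc 1 (n - 1), (-1 : ℚ) ^ (t - 1) * a t ((i.val : ℤ) + 1)
      else if i.val = j.val + 1 then b ((i.val : ℤ) + 1)
      else if i.val < j.val then
        -- c_i^{(s)} with s = j - i
        (-1 : ℚ) ^ (j.val - i.val) *
          ((∑ t ∈ Finset.Icc (j.val - i.val + 1) (n - 1),
              (-1 : ℚ) ^ (t - 1) * a t ((i.val : ℤ) + 1))
            - ∑ t ∈ Finset.Icc (j.val - i.val) (n - 1),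
                (-1 : ℚ) ^ (t - 1) * a t ((i.val : ℤ) + 2))
      else 0 := by
  have hb1 : b 1 = 0 := hb 1 (Or.inl le_rfl)
  funext i j
  have hI : i.val < n := i.isLt
  have hJ : j.val < n := j.isLt
  have hAE : ∀ p q : Fin n, A p q = Ent n r a b p.val q.val := by
    intro p q; rw [hA p q]; rfl
  have hvan : ∀ m s : ℕ, 1 ≤ s → n ≤ m + s →
      (∑ t ∈ Finset.Icc s (n - 1), (-1 : ℚ) ^ (t - 1) * a t ((m : ℤ) + 1)) = 0 := by
    intro m s hs1 hns
    apply Finset.sum_eq_zero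
    intro t ht
    rw [Finset.mem_Icc] at ht
    rw [ha t (le_trans hs1 ht.1) ht.2 ((m : ℤ) + 1) (Or.inl (by omega)), mul_zero]
  have sum_ind : ∀ (m : ℕ) (C : ℚ),
      (∑ k : Fin n, if m = k.val then C else 0) = if m < n then C else 0 := by
    intro m C
    by_cases hm : m < n
    · rw [if_pos hm]
      rw [Finset.sum_eq_single (⟨m, hm⟩ : Fin n)]
      · rw [if_pos rfl]
      · intro k _ hk
        exact if_neg (fun hc => hk (Fin.ext hc.symm))
      · intro habs; exact absurd (Finset.mem_univ _) habs
    · rw [if_neg hm]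
      apply Finset.sum_eq_zero
      intro k _
      exact if_neg (fun hc => hm (by rw [hc]; exact k.isLt))
  have hPA : ∀ l : Fin n, (P * A) i l
      = Ent n r a b i.val l.val + (if i.val + 1 < n then Ent n r a b (i.val + 1) l.val else 0) := by
    intro l
    have hterm : ∀ k : Fin n, P i k * A k l
        = (if i.val = k.val then Ent n r a b i.val l.val else 0)
          + (if i.val + 1 = k.val then Ent n r a b (i.val + 1) l.val else 0) := by
      intro k
      rw [hP i k, hAE k l]
      by_cases h1 : i.val = k.val
      · rw [if_pos (Or.inl h1), if_pos h1, if_neg (show ¬ i.val + 1 = k.val by omega),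
          one_mul, add_zero, h1]
      · by_cases h2 : i.val + 1 = k.val
        · rw [if_pos (Or.inr h2), if_neg h1, if_pos h2, one_mul, zero_add, h2]
        · rw [if_neg (show ¬ (i.val = k.val ∨ i.val + 1 = k.val) from by
            push_neg; exact ⟨h1, h2⟩), if_neg h1, if_neg h2, zero_mul, add_zero]
    rw [Matrix.mul_apply, Finset.sum_congr rfl fun k _ => hterm k, Finset.sum_add_distrib,
      sum_ind i.val _, sum_ind (i.val + 1) _, if_pos hI]
  have hQE : ∀ (m : ℕ) (l : Fin n), Ent n r a b m l.val * Q l j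
      = if l.val ≤ j.val then (-1 : ℚ) ^ (l.val + j.val) * Ent n r a b m l.val else 0 := by
    intro m l
    rw [hQ l j]
    by_cases h : l.val ≤ j.val
    · rw [if_pos h, if_pos h,
        show l.val + 1 + (j.val + 1) = (l.val + j.val) + 2 by ring, pow_add]
      ring
    · rw [if_neg h, if_neg h, mul_zero]
  have hfin : ∀ m : ℕ,
      (∑ l : Fin n, if l.val ≤ j.val then (-1 : ℚ) ^ (l.val + j.val) * Ent n r a b m l.val else 0)
      = ∑ l ∈ Finset.range (j.val + 1), (-1 : ℚ) ^ (l + j.val) * Ent n r a b m l := by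
    intro m
    refine (Fin.sum_univ_eq_sum_range
      (fun l => if l ≤ j.val then (-1 : ℚ) ^ (l + j.val) * Ent n r a b m l else 0) n).trans ?_
    refine ((Finset.sum_subset (Finset.range_subset_range.mpr hJ) fun l _ hl =>
      if_neg (by simp only [Finset.mem_range] at hl; omega)).symm).trans
      (Finset.sum_congr rfl fun l hl =>
        if_pos (Nat.lt_succ_iff.mp (Finset.mem_range.mp hl)))
  have hmain : (P * A * Q) i j
      = (∑ l ∈ Finset.range (j.val + 1), (-1 : ℚ) ^ (l + j.val) * Ent n r a b i.val l)
        + (if i.val + 1 < n then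
            ∑ l ∈ Finset.range (j.val + 1), (-1 : ℚ) ^ (l + j.val) * Ent n r a b (i.val + 1) l
          else 0) := by
    rw [Matrix.mul_apply]
    by_cases h : i.val + 1 < n
    · rw [if_pos h]
      have hterm : ∀ l : Fin n, (P * A) i l * Q l j
          = (if l.val ≤ j.val then (-1 : ℚ) ^ (l.val + j.val) * Ent n r a b i.val l.val else 0)
            + (if l.val ≤ j.val then
                (-1 : ℚ) ^ (l.val + j.val) * Ent n r a b (i.val + 1) l.val else 0) := by
        intro l
        rw [hPA l, if_pos h, add_mul, hQE i.val l, hQE (i.val + 1) l]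
      rw [Finset.sum_congr rfl fun l _ => hterm l, Finset.sum_add_distrib,
        hfin i.val, hfin (i.val + 1)]
    · rw [if_neg h]
      have hterm : ∀ l : Fin n, (P * A) i l * Q l j
          = (if l.val ≤ j.val then
              (-1 : ℚ) ^ (l.val + j.val) * Ent n r a b i.val l.val else 0) := by
        intro l
        rw [hPA l, if_neg h, add_zero, hQE i.val l]
      rw [Finset.sum_congr rfl fun l _ => hterm l, hfin i.val, add_zero]
  rw [hmain, key_sum n r a b hb1 j.val hJ i.val, key_sum n r a b hb1 j.val hJ (i.val + 1)]
  by_cases hIn : i.val + 1 < n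
  · rw [if_pos hIn, if_neg (show ¬ i.val = n - 1 by omega)]
    by_cases hJn : j.val = n - 1
    · rw [if_pos hJn,
        if_pos (show i.val ≤ j.val by omega),
        if_pos (show i.val + 1 ≤ j.val by omega),
        hvan i.val (j.val - i.val + 1) (by omega) (by omega),
        hvan (i.val + 1) (j.val - (i.val + 1) + 1) (by omega) (by omega),
        show i.val + 1 + j.val = (i.val + j.val) + 1 by ring, pow_succ]
      ring
    · rw [if_neg hJn]
      rcases Nat.lt_trichotomy i.val j.val with hij | hij | hij
      · rw [if_pos (show i.val ≤ j.val by omega),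
          if_pos (show i.val + 1 ≤ j.val by omega),
          if_neg (show ¬ i.val = j.val by omega),
          if_neg (show ¬ i.val = j.val + 1 by omega),
          if_pos hij,
          show j.val - (i.val + 1) + 1 = j.val - i.val by omega,
          show ((i.val + 1 : ℕ) : ℤ) + 1 = (i.val : ℤ) + 2 from by push_cast; ring,
          show i.val + 1 + j.val = (i.val + j.val) + 1 by ring, pow_succ,
          show (-1 : ℚ) ^ (i.val + j.val) = (-1 : ℚ) ^ (j.val - i.val) from by
            rw [show i.val + j.val = (j.val - i.val) + 2 * i.val by omega, pow_add, pow_mul]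
            norm_num]
        ring
      · rw [if_pos hij,
          if_pos (show i.val ≤ j.val by omega),
          if_neg (show ¬ i.val + 1 ≤ j.val by omega),
          if_pos (show i.val + 1 = j.val + 1 by omega),
          show j.val - i.val + 1 = 1 by omega,
          show (-1 : ℚ) ^ (i.val + j.val) = 1 from by
            rw [show i.val + j.val = 2 * i.val by omega, pow_mul]; norm_num,
          show ((i.val + 1 : ℕ) : ℤ) + 1 = (i.val : ℤ) + 2 from by push_cast; ring]
        ring
      · rw [if_neg (show ¬ i.val = j.val by omega),
          if_neg (show ¬ i.val ≤ j.val by omega),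
          if_neg (show ¬ i.val + 1 ≤ j.val by omega),
          if_neg (show ¬ i.val + 1 = j.val + 1 by omega)]
        by_cases h2 : i.val = j.val + 1
        · rw [if_pos h2, if_pos h2, add_zero]
        · rw [if_neg h2, if_neg h2, if_neg (show ¬ i.val < j.val by omega), add_zero]
  · rw [if_neg hIn, add_zero, if_pos (show i.val = n - 1 by omega)]
    by_cases hJn : j.val = n - 1
    · rw [if_pos hJn, if_pos (show i.val ≤ j.val by omega),
        show j.val - i.val + 1 = 1 by omega,
        hvan i.val 1 (le_refl 1) (by omega),
        show (-1 : ℚ) ^ (i.val + j.val) = 1 from by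
          rw [show i.val + j.val = 2 * i.val by omega, pow_mul]; norm_num]
      ring
    · rw [if_neg hJn]
      by_cases hJ2 : j.val + 2 = n
      · rw [if_pos hJ2, if_neg (show ¬ i.val ≤ j.val by omega),
          if_pos (show i.val = j.val + 1 by omega),
          show (i.val : ℤ) + 1 = (n : ℤ) by omega]
      · rw [if_neg hJ2, if_neg (show ¬ i.val ≤ j.val by omega),
          if_neg (show ¬ i.val = j.val + 1 by omega)]
end
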